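/- Let Y(θ) be a zero-mean Gaussian process on a compact parameter space Θ ⊂ ℝ^q with covariance K_θ(θ,θ') = κ exp(-Σ_i φ_i|θ_i - θ'_i|) (no nugget, κ > 0, φ_i > 0), conditioned on values at design points θ₁,…,θ_p. Then the conditional (kriging) variance at any θ*, namely κ - Σ_{θ*θ} Σ_θ⁻¹ Σ_{θ*θ}ᵀ, satisfies: it is zero whenever θ* equals a design point, and it is bounded above by 2κ(1 - exp(-Σ_i φ_i |θ* - θ_{j}|_i)) ≤ 2κ Σ_i φ_i ‖θ* - θ_j‖_∞ for the nearest design point θ_j, hence it converges to 0 uniformly on Θ as the fill distance of the design points tends to zero. -/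

import Mathlib

/-!
Since `exp (-φ|s - t|) = exp (-φ s) exp (-φ t) min (exp (2φ s), exp (2φ t))`, the covariance
matrix `M` of the design is a positive diagonal congruence of the matrix `∏ᵢ min (vₐᵢ, v_bᵢ)`,
and that matrix is the Gram matrix, for a positive weighting of a finite grid, of the
indicators of the boxes `(0, vₐ]`; these indicators are linearly independent for distinct
points, so `M` is positive definite. For the cross-covariance vector `k` of `θ*`,
`k ⬝ᵥ M⁻¹ k = max_x (2 x ⬝ᵥ k - x ⬝ᵥ M x)`, and the choice `x = eⱼ` bounds the kriging variance
by `2 (κ - K(θ*, θⱼ))`. At `θ* = θⱼ` the vector `k` is the `j`-th row of `M`, so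
`k ⬝ᵥ M⁻¹ k = M j j = κ`. The remaining bounds follow from `1 - e⁻ˣ ≤ x`.
-/

open Matrix

/-- The exponential covariance function `K(θ,θ') = κ exp(-∑ᵢ φᵢ|θᵢ - θ'ᵢ|)` (no nugget). -/
noncomputable def expKernel (q : ℕ) (κ : ℝ) (φ : Fin q → ℝ) (x y : Fin q → ℝ) : ℝ :=
  κ * Real.exp (-(∑ i, φ i * |x i - y i|))

/-- The kriging (conditional) variance `κ - Σ_{θ*θ} Σ_θ⁻¹ Σ_{θ*θ}ᵀ` of the zero-mean
Gaussian process with covariance `expKernel` at the point `θs`, given values at the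
design points `θd`. -/
noncomputable def krigVar (q : ℕ) (κ : ℝ) (φ : Fin q → ℝ) {p : ℕ}
    (θd : Fin p → Fin q → ℝ) (θs : Fin q → ℝ) : ℝ :=
  κ - (fun a => expKernel q κ φ θs (θd a)) ⬝ᵥ
    ((Matrix.of fun a b => expKernel q κ φ (θd a) (θd b))⁻¹ *ᵥ
      fun a => expKernel q κ φ θs (θd a))

open Finset

/-- For `w ∈ F`, `w - prevOrZero F w` is the length of the gap of `{0} ∪ F` ending at `w`. -/
noncomputable def prevOrZero (F : Finset ℝ) (w : ℝ) : ℝ :=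
  (insert 0 {x ∈ F | x < w}).max' (insert_nonempty _ _)

section prevOrZero
variable {F : Finset ℝ} {w : ℝ}

lemma prevOrZero_lt (hw : 0 < w) : prevOrZero F w < w := by
  rw [prevOrZero, max'_lt_iff]
  simp only [mem_insert, mem_filter]
  rintro x (rfl | ⟨-, hx⟩) <;> assumption

lemma prevOrZero_insert_of_le {a : ℝ} (h : w ≤ a) :
    prevOrZero (insert a F) w = prevOrZero F w := by
  simp only [prevOrZero, filter_insert, not_lt.2 h, if_false]

lemma prevOrZero_of_forall_lt (h : ∀ x ∈ F, x < w) :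
    prevOrZero F w = (insert 0 F).max' (insert_nonempty _ _) := by
  simp only [prevOrZero, filter_true_of_mem h]

lemma sum_filter_le_sub_prevOrZero (hF : ∀ x ∈ F, 0 < x) {m : ℝ} (hm : m ∈ F) :
    ∑ w ∈ F with w ≤ m, (w - prevOrZero F w) = m := by
  classical
  induction F using Finset.induction_on_max generalizing m with
  | empty => simp at hm
  | insert a s hlt ih =>
    have hs : ∀ x ∈ s, 0 < x := fun x hx => hF x (mem_insert_of_mem hx)
    have hgap : ∀ w ∈ s, w - prevOrZero (insert a s) w = w - prevOrZero s w := fun w hw => by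
      rw [prevOrZero_insert_of_le (hlt w hw).le]
    rcases mem_insert.1 hm with rfl | hm
    · have hall : {w ∈ insert m s | w ≤ m} = insert m s :=
        filter_true_of_mem fun w hw => (mem_insert.1 hw).elim le_of_eq fun h => (hlt w h).le
      have hnot : m ∉ s := fun h => lt_irrefl _ (hlt m h)
      rw [hall, sum_insert hnot, sum_congr rfl hgap, prevOrZero_insert_of_le le_rfl,
        prevOrZero_of_forall_lt hlt]
      rcases s.eq_empty_or_nonempty with rfl | hne
      · simp
      · have htop := ih hs (max'_mem s hne)
        rw [filter_true_of_mem fun w hw => le_max' s w hw] at htop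
        rw [htop, max'_insert _ _ hne, max_eq_right (hs _ (max'_mem s hne)).le]
        ring
    · have hle : {w ∈ insert a s | w ≤ m} = {w ∈ s | w ≤ m} := by
        rw [filter_insert, if_neg (not_le.2 (hlt m hm))]
      rw [hle, sum_congr rfl fun w hw => hgap w (mem_filter.1 hw).1]
      exact ih hs hm

lemma min_eq_sum_sub_prevOrZero (hF : ∀ x ∈ F, 0 < x) {s t : ℝ} (hs : s ∈ F) (ht : t ∈ F) :
    min s t = ∑ w ∈ F, (w - prevOrZero F w) *
      ((if w ≤ s then 1 else 0) * (if w ≤ t then 1 else 0)) := by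
  have hmin : min s t ∈ F := by rcases min_choice s t with h | h <;> rw [h] <;> assumption
  simp_rw [ite_zero_mul_ite_zero, one_mul, ← le_min_iff, mul_ite, mul_one, mul_zero, ← sum_filter]
  exact (sum_filter_le_sub_prevOrZero hF hmin).symm

end prevOrZero

lemma eq_zero_of_forall_sum_ite_le_eq_zero {n P M : Type*} [Fintype n] [PartialOrder P]
    [DecidableLE P] [AddCommMonoid M] {v : n → P} (hv : Function.Injective v) {c : n → M}
    (hc : ∀ b, ∑ a, (if v b ≤ v a then c a else 0) = 0) : c = 0 := by
  by_contra hne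
  obtain ⟨b, hb, hmax⟩ := Set.Finite.exists_maximalFor v {a | c a ≠ 0} (Set.toFinite _)
    (Function.support_nonempty_iff.2 hne)
  refine hb ?_
  rw [← hc b, sum_eq_single b (fun a _ hab => ?_) (by simp), if_pos le_rfl]
  by_cases hca : c a = 0
  · simp [hca]
  · exact if_neg fun hle => hab (hv (le_antisymm (hmax hca hle) hle))

section prodMin
variable {ι n : Type*} [Fintype ι]

open scoped Classical in
lemma prod_min_eq_sum_piFinset [DecidableEq ι] {F : ι → Finset ℝ} (hF : ∀ i, ∀ x ∈ F i, 0 < x)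
    {s t : ι → ℝ} (hs : s ∈ Fintype.piFinset F) (ht : t ∈ Fintype.piFinset F) :
    ∏ i, min (s i) (t i) = ∑ w ∈ Fintype.piFinset F, (∏ i, (w i - prevOrZero (F i) (w i))) *
      ((if w ≤ s then 1 else 0) * (if w ≤ t then 1 else 0)) := by
  rw [prod_congr rfl fun i _ => min_eq_sum_sub_prevOrZero (hF i)
    (Fintype.mem_piFinset.1 hs i) (Fintype.mem_piFinset.1 ht i), prod_univ_sum]
  simp only [prod_mul_distrib, prod_boole, mem_univ, true_implies, Pi.le_def]

/-- By `prod_min_eq_sum_piFinset`, `∏ᵢ min (xᵢ, yᵢ)` is a Gram kernel of the indicators of the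
boxes `(0, x]` over a finite grid, and these indicators are linearly independent. -/
theorem posDef_prod_min [Fintype n] {v : n → ι → ℝ} (hv : ∀ a i, 0 < v a i)
    (hinj : Function.Injective v) :
    (Matrix.of fun a b => ∏ i, min (v a i) (v b i)).PosDef := by
  classical
  set F : ι → Finset ℝ := fun i => univ.image fun a => v a i
  have hF : ∀ i, ∀ x ∈ F i, 0 < x := fun i x hx => by
    obtain ⟨a, -, rfl⟩ := mem_image.1 hx
    exact hv a i
  have hmem : ∀ a, v a ∈ Fintype.piFinset F := fun a =>
    Fintype.mem_piFinset.2 fun i => mem_image_of_mem _ (mem_univ a)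
  let W := Fintype.piFinset F
  let B : Matrix W n ℝ := Matrix.of fun w a => if (w : ι → ℝ) ≤ v a then 1 else 0
  let G : W → ℝ := fun w => ∏ i, ((w : ι → ℝ) i - prevOrZero (F i) ((w : ι → ℝ) i))
  have hG : ∀ w, 0 < G w := fun w => prod_pos fun i _ =>
    sub_pos.2 (prevOrZero_lt (hF i _ (Fintype.mem_piFinset.1 w.2 i)))
  have hgram : (Matrix.of fun a b => ∏ i, min (v a i) (v b i)) = Bᴴ * diagonal G * B := by
    ext a b
    rw [of_apply, prod_min_eq_sum_piFinset hF (hmem a) (hmem b), mul_apply, ← sum_coe_sort]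
    simp only [mul_diagonal, conjTranspose_apply, star_trivial, B, G, of_apply]
    exact sum_congr rfl fun w _ => by ring
  have hB : Function.Injective B.mulVec := by
    refine (injective_iff_map_eq_zero B.mulVecLin).2 fun c hc =>
      eq_zero_of_forall_sum_ite_le_eq_zero hinj fun b => ?_
    simpa [B, mulVec, dotProduct, ite_mul] using congrFun hc ⟨v b, hmem b⟩
  rw [hgram]
  exact (posDef_diagonal_iff.2 hG).conjTranspose_mul_mul_same hB

end prodMin

lemma exp_neg_mul_abs_sub {φ : ℝ} (hφ : 0 ≤ φ) (s t : ℝ) :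
    Real.exp (-(φ * |s - t|)) = Real.exp (-(φ * s)) * Real.exp (-(φ * t)) *
      min (Real.exp (2 * (φ * s))) (Real.exp (2 * (φ * t))) := by
  rw [← Real.exp_monotone.map_min, ← Real.exp_add, ← Real.exp_add]
  congr 1
  rcases le_total s t with h | h
  · rw [min_eq_left (by nlinarith), abs_of_nonpos (sub_nonpos.2 h)]; ring
  · rw [min_eq_right (by nlinarith), abs_of_nonneg (sub_nonneg.2 h)]; ring

section expKernel
variable {q : ℕ} {κ : ℝ} {φ : Fin q → ℝ}

lemma expKernel_eq_mul_prod_min (hφ : ∀ i, 0 ≤ φ i) (x y : Fin q → ℝ) :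
    expKernel q κ φ x y = κ * (Real.exp (-∑ i, φ i * x i) * Real.exp (-∑ i, φ i * y i) *
      ∏ i, min (Real.exp (2 * (φ i * x i))) (Real.exp (2 * (φ i * y i)))) := by
  simp only [expKernel, ← sum_neg_distrib, Real.exp_sum, exp_neg_mul_abs_sub (hφ _),
    prod_mul_distrib]

lemma expKernel_self (x : Fin q → ℝ) : expKernel q κ φ x x = κ := by
  simp [expKernel]

theorem posDef_expKernel (hκ : 0 < κ) (hφ : ∀ i, 0 < φ i) {p : ℕ} {θd : Fin p → Fin q → ℝ}
    (hinj : Function.Injective θd) :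
    (Matrix.of fun a b => expKernel q κ φ (θd a) (θd b)).PosDef := by
  set v : Fin p → Fin q → ℝ := fun a i => Real.exp (2 * (φ i * θd a i))
  have hv : Function.Injective v := fun a b hab => hinj <| funext fun i => by
    simpa [v, (hφ i).ne'] using congrFun hab i
  set D : Matrix (Fin p) (Fin p) ℝ := diagonal fun a => Real.exp (-∑ i, φ i * θd a i)
  have hD : IsUnit D := isUnit_diagonal.2 <| Pi.isUnit_iff.2 fun a => (Real.exp_pos _).ne'.isUnit
  have hconj : (Matrix.of fun a b => expKernel q κ φ (θd a) (θd b)) =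
      star D * (κ • Matrix.of fun a b => ∏ i, min (v a i) (v b i)) * D := by
    ext a b
    simp only [expKernel_eq_mul_prod_min fun i => (hφ i).le, of_apply, star_eq_conjTranspose,
      conjTranspose_eq_transpose_of_trivial, diagonal_transpose, smul_of, mul_diagonal,
      diagonal_mul, Pi.smul_apply, smul_eq_mul, D, v]
    ring
  rw [hconj, IsUnit.posDef_star_left_conjugate_iff hD]
  exact (posDef_prod_min (fun a i => Real.exp_pos _) hv).smul hκ

end expKernel

lemma vecMul_dotProduct_inv_mulVec {n R : Type*} [Fintype n] [DecidableEq n] [CommRing R]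
    {M : Matrix n n R} (hM : IsUnit M.det) (x y : n → R) :
    (x ᵥ* M) ⬝ᵥ (M⁻¹ *ᵥ y) = x ⬝ᵥ y := by
  rw [← dotProduct_mulVec, mulVec_mulVec, mul_nonsing_inv _ hM, one_mulVec]

/-- Expand `0 ≤ (M⁻¹ k - x) ⬝ᵥ M (M⁻¹ k - x)`: the bound is attained at `x = M⁻¹ k`. -/
lemma Matrix.PosDef.two_mul_dotProduct_sub_le {n : Type*} [Fintype n] [DecidableEq n]
    {M : Matrix n n ℝ} (hM : M.PosDef) (k x : n → ℝ) :
    2 * (x ⬝ᵥ k) - x ⬝ᵥ (M *ᵥ x) ≤ k ⬝ᵥ (M⁻¹ *ᵥ k) := by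
  set y := M⁻¹ *ᵥ k
  have hy : M *ᵥ y = k := by
    rw [mulVec_mulVec, mul_nonsing_inv _ ((isUnit_iff_isUnit_det M).1 hM.isUnit), one_mulVec]
  have hsymm : y ⬝ᵥ (M *ᵥ x) = x ⬝ᵥ k := by
    rw [dotProduct_mulVec, ← mulVec_transpose, ← conjTranspose_eq_transpose_of_trivial,
      hM.isHermitian.eq, hy, dotProduct_comm]
  have hnonneg := hM.posSemidef.dotProduct_mulVec_nonneg (y - x)
  simp only [star_trivial, mulVec_sub, sub_dotProduct, dotProduct_sub, hy, hsymm] at hnonneg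
  linarith [dotProduct_comm y k]

lemma sum_mul_le_sum_mul_ciSup {ι : Type*} [Fintype ι] {φ g : ι → ℝ} (hφ : ∀ i, 0 ≤ φ i) :
    ∑ i, φ i * g i ≤ (∑ i, φ i) * ⨆ i, g i := by
  rw [sum_mul]
  exact sum_le_sum fun i _ =>
    mul_le_mul_of_nonneg_left (le_ciSup (Set.finite_range g).bddAbove i) (hφ i)

section krigVar
variable {q : ℕ} {κ : ℝ} {φ : Fin q → ℝ} {p : ℕ} {θd : Fin p → Fin q → ℝ}

theorem krigVar_design_eq_zero (hκ : 0 < κ) (hφ : ∀ i, 0 < φ i)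
    (hinj : Function.Injective θd) (j : Fin p) : krigVar q κ φ θd (θd j) = 0 := by
  have hM := posDef_expKernel hκ hφ hinj
  have hrow : (fun a => expKernel q κ φ (θd j) (θd a)) =
      Pi.single j 1 ᵥ* Matrix.of fun a b => expKernel q κ φ (θd a) (θd b) := by
    rw [single_one_vecMul]; rfl
  rw [krigVar, hrow, vecMul_dotProduct_inv_mulVec ((isUnit_iff_isUnit_det _).1 hM.isUnit),
    ← hrow, single_dotProduct, one_mul, expKernel_self, sub_self]

theorem krigVar_le_two_mul_one_sub_exp (hκ : 0 < κ) (hφ : ∀ i, 0 < φ i)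
    (hinj : Function.Injective θd) (θs : Fin q → ℝ) (j : Fin p) :
    krigVar q κ φ θd θs ≤ 2 * κ * (1 - Real.exp (-(∑ i, φ i * |θs i - θd j i|))) := by
  have h := (posDef_expKernel hκ hφ hinj).two_mul_dotProduct_sub_le
    (fun a => expKernel q κ φ θs (θd a)) (Pi.single j 1)
  simp only [single_dotProduct, mulVec_single_one, one_mul, col_apply, of_apply,
    expKernel_self] at h
  have hj : expKernel q κ φ θs (θd j) = κ * Real.exp (-(∑ i, φ i * |θs i - θd j i|)) := rfl
  rw [krigVar]
  linarith

theorem krigVar_le_two_mul_sum (hκ : 0 < κ) (hφ : ∀ i, 0 < φ i)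
    (hinj : Function.Injective θd) (θs : Fin q → ℝ) (j : Fin p) :
    krigVar q κ φ θd θs ≤ 2 * κ * ∑ i, φ i * |θs i - θd j i| :=
  (krigVar_le_two_mul_one_sub_exp hκ hφ hinj θs j).trans <| mul_le_mul_of_nonneg_left
    (by linarith [Real.one_sub_le_exp_neg (∑ i, φ i * |θs i - θd j i|)]) (by positivity)

theorem krigVar_le_two_mul_sum_mul_iSup (hκ : 0 < κ) (hφ : ∀ i, 0 < φ i)
    (hinj : Function.Injective θd) (θs : Fin q → ℝ) (j : Fin p) :
    krigVar q κ φ θd θs ≤ 2 * κ * (∑ i, φ i) * ⨆ i, |θs i - θd j i| := by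
  rw [mul_assoc]
  exact (krigVar_le_two_mul_sum hκ hφ hinj θs j).trans <| mul_le_mul_of_nonneg_left
    (sum_mul_le_sum_mul_ciSup fun i => (hφ i).le) (by positivity)

end krigVar

theorem krigVar_zero_at_design_and_uniformly_small_general
    {q : ℕ} (κ : ℝ) (φ : Fin q → ℝ) (hκ : 0 < κ) (hφ : ∀ i, 0 < φ i)
    {p : ℕ} (θd : Fin p → Fin q → ℝ) (hinj : Function.Injective θd)
    (Θset : Set (Fin q → ℝ)) :
    (∀ j0 : Fin p, krigVar q κ φ θd (θd j0) = 0) ∧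
      (∀ (θs : Fin q → ℝ) (j : Fin p),
        krigVar q κ φ θd θs
            ≤ 2 * κ * (1 - Real.exp (-(∑ i, φ i * |θs i - θd j i|))) ∧
          krigVar q κ φ θd θs ≤ 2 * κ * ∑ i, φ i * |θs i - θd j i| ∧
          krigVar q κ φ θd θs ≤ 2 * κ * (∑ i, φ i) * ⨆ i, |θs i - θd j i|) ∧
      (∀ ε > (0 : ℝ), ∃ δ > (0 : ℝ),
        ∀ (p' : ℕ) (θd' : Fin p' → Fin q → ℝ), Function.Injective θd' →
          (∀ θ ∈ Θset, ∃ j, ∀ i, |θ i - θd' j i| < δ) →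
          ∀ θ ∈ Θset, krigVar q κ φ θd' θ < ε) := by
  refine ⟨krigVar_design_eq_zero hκ hφ hinj, fun θs j =>
    ⟨krigVar_le_two_mul_one_sub_exp hκ hφ hinj θs j, krigVar_le_two_mul_sum hκ hφ hinj θs j,
      krigVar_le_two_mul_sum_mul_iSup hκ hφ hinj θs j⟩, fun ε hε => ?_⟩
  set C := 2 * κ * ∑ i, φ i
  have hC : 0 ≤ C := mul_nonneg (by positivity) (sum_nonneg fun i _ => (hφ i).le)
  refine ⟨ε / (C + 1), by positivity, fun p' θd' hinj' hfill θ hθ => ?_⟩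
  obtain ⟨j, hj⟩ := hfill θ hθ
  calc krigVar q κ φ θd' θ ≤ C * ⨆ i, |θ i - θd' j i| :=
        krigVar_le_two_mul_sum_mul_iSup hκ hφ hinj' θ j
    _ ≤ C * (ε / (C + 1)) :=
        mul_le_mul_of_nonneg_left (Real.iSup_le (fun i => (hj i).le) (by positivity)) hC
    _ < ε := by
        rw [mul_div_assoc', div_lt_iff₀ (by linarith)]
        nlinarith

/-- the kriging variance of the (nugget-free) exponential-covariance
Gaussian process vanishes at every design point; at any `θ*` it is bounded by
`2κ(1 - exp(-∑ᵢ φᵢ|θ*ᵢ - θⱼᵢ|)) ≤ 2κ ∑ᵢ φᵢ|θ*ᵢ - θⱼᵢ| ≤ 2κ(∑ᵢφᵢ)‖θ* - θⱼ‖_∞` for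
every design point `θⱼ` (in particular the nearest one); and hence it converges to `0`
uniformly on a compact parameter set `Θ` as the fill distance of the design points
tends to zero. -/
theorem krigVar_zero_at_design_and_uniformly_small
    {q : ℕ} (κ : ℝ) (φ : Fin q → ℝ) (hκ : 0 < κ) (hφ : ∀ i, 0 < φ i)
    {p : ℕ} (θd : Fin p → Fin q → ℝ) (hinj : Function.Injective θd)
    (Θset : Set (Fin q → ℝ)) (hΘ : IsCompact Θset) :
    (∀ j0 : Fin p, krigVar q κ φ θd (θd j0) = 0) ∧
      (∀ (θs : Fin q → ℝ) (j : Fin p),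
        krigVar q κ φ θd θs
            ≤ 2 * κ * (1 - Real.exp (-(∑ i, φ i * |θs i - θd j i|))) ∧
          krigVar q κ φ θd θs ≤ 2 * κ * ∑ i, φ i * |θs i - θd j i| ∧
          krigVar q κ φ θd θs ≤ 2 * κ * (∑ i, φ i) * ⨆ i, |θs i - θd j i|) ∧
      (∀ ε > (0 : ℝ), ∃ δ > (0 : ℝ),
        ∀ (p' : ℕ) (θd' : Fin p' → Fin q → ℝ), Function.Injective θd' →
          (∀ θ ∈ Θset, ∃ j, ∀ i, |θ i - θd' j i| < δ) →
          ∀ θ ∈ Θset, krigVar q κ φ θd' θ < ε) :=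
  krigVar_zero_at_design_and_uniformly_small_general κ φ hκ hφ θd hinj Θset
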